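/- arXiv:2111.10038 — 3 statements merged into one kernel-verified Lean document; each statement's English description precedes it below -/
import Mathlib

section
/- Every bipartite graph G = (U ∪ V, E) with parts V = {v₁,…,v_d} and U = {u₁,…,u_m}, d ≤ m, is general d'-word-representable for every d' ≥ d = |V|. Concretely, the word W = W₁W₂⋯W_d is a general d-word-representant, where W_i is the concatenation over j (in increasing order of j if i is odd, decreasing if i is even) of the blocks F_i(u_j), and F_i(u_j) is an alternating word of length d + 2 in letters {v_i, u_j} if {v_i, u_j} ∈ E and the empty word otherwise. -/
/-!
Each edge `v_i u_j` is witnessed by its own block `F_i(u_j)`. For a non-edge `{x, y}`, restrict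
`W` to the letters `x, y`: every row `W_k` then reads `aᵖ bᵠ`. If `x = v_i`, then `x` occurs only
in `W_i`, where neither another `v_i'` nor a non-neighbour `u_j` occurs, so every restricted row
is constant. If `x = u_j`, `y = u_j'`, the rows read alternately `u_jᵖ u_j'ᵠ` and `u_j'ᵖ u_jᵠ`, so
consecutive rows meet in the same letter. Either way the restricted word is a concatenation of at
most `d + 1` constant runs, and an alternating subsequence takes at most one letter from each run.
-/

/-- Letters `a` and `b` are `d`-intersecting in `W`. -/
def DIntersecting {V : Type*} (d : ℕ) (W : List V) (a b : V) : Prop :=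
  ∃ l : List V, l.Sublist W ∧ l.Chain' (· ≠ ·) ∧ (∀ c ∈ l, c = a ∨ c = b) ∧
    d + 2 ≤ l.length

/-- `W` general `d`-word-represents `G`. -/
def GenWordRepresents {V : Type*} (d : ℕ) (W : List V) (G : SimpleGraph V) : Prop :=
  ∀ x y : V, x ≠ y → (DIntersecting d W x y ↔ G.Adj x y)

/-- The alternating word `abab…` of length `n`. -/
def altWord {V : Type*} (a b : V) (n : ℕ) : List V :=
  (List.range n).map (fun k => if k % 2 = 0 then a else b)

/-- The block `F_i(u_j)`: an alternating word of length `d + 2` in the letters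
`v_i, u_j` if `{v_i, u_j}` is an edge, and the empty word otherwise. -/
def bipBlock {d m : ℕ} (G : SimpleGraph (Fin d ⊕ Fin m)) [DecidableRel G.Adj]
    (i : Fin d) (j : Fin m) : List (Fin d ⊕ Fin m) :=
  if G.Adj (Sum.inl i) (Sum.inr j) then altWord (Sum.inl i) (Sum.inr j) (d + 2) else []

/-- The word `W_i = F_i(u_1)⋯F_i(u_m)` (increasing order of `j` for the first, third, …
block and decreasing order for the second, fourth, … block). -/
def bipRow {d m : ℕ} (G : SimpleGraph (Fin d ⊕ Fin m)) [DecidableRel G.Adj]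
    (i : Fin d) : List (Fin d ⊕ Fin m) :=
  ((if i.val % 2 = 0 then List.finRange m else (List.finRange m).reverse).map
    (bipBlock G i)).flatten

/-- The word `W = W₁W₂⋯W_d` of the bipartite construction. -/
def bipWord (d m : ℕ) (G : SimpleGraph (Fin d ⊕ Fin m)) [DecidableRel G.Adj] :
    List (Fin d ⊕ Fin m) :=
  ((List.finRange d).map (bipRow G)).flatten

open List

namespace List

variable {α : Type*} {l : List α}

theorem IsChain.length_le_one_of_sublist_replicate {a : α} {n : ℕ}
    (hl : l.IsChain (· ≠ ·)) (h : l <+ replicate n a) : l.length ≤ 1 := by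
  obtain ⟨k, -, rfl⟩ := sublist_replicate_iff.mp h
  match k, hl with
  | 0, _ | 1, _ => simp
  | k + 2, hl => exact absurd rfl (isChain_cons_cons.mp hl).1

theorem IsChain.length_le_of_sublist_flatten {L : List (List α)}
    (hL : ∀ M ∈ L, ∃ a n, M = replicate n a) (hl : l.IsChain (· ≠ ·)) (h : l <+ L.flatten) :
    l.length ≤ L.length := by
  induction L generalizing l with
  | nil => simp [sublist_nil.mp h]
  | cons M L ih =>
    obtain ⟨l₁, l₂, rfl, h₁, h₂⟩ := sublist_append_iff.mp h
    obtain ⟨a, n, rfl⟩ := hL M mem_cons_self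
    have hl₁ := hl.left_of_append.length_le_one_of_sublist_replicate h₁
    have hl₂ := ih (fun M hM => hL M (mem_cons_of_mem _ hM)) hl.right_of_append h₂
    simp only [length_append, length_cons]
    omega

theorem exists_sublist_replicate_append_flatten {n : ℕ} (R : Fin n → List α) (c : ℕ → α)
    (hR : ∀ k : Fin n, ∃ p q, R k = replicate p (c k) ++ replicate q (c (k + 1))) :
    ∃ p, ∃ L : List (List α), L.length = n ∧ (∀ M ∈ L, ∃ a q, M = replicate q a) ∧
      (ofFn R).flatten <+ replicate p (c 0) ++ L.flatten := by
  induction n generalizing c with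
  | zero => exact ⟨0, [], rfl, by simp, by simp⟩
  | succ n ih =>
    obtain ⟨p, q, hR₀⟩ := hR 0
    obtain ⟨p', L, hlen, hL, hsub⟩ :=
      ih (fun k => R k.succ) (fun k => c (k + 1)) (fun k => by simpa using hR k.succ)
    refine ⟨p, replicate (q + p') (c 1) :: L, by simp [hlen], ?_, ?_⟩
    · exact forall_mem_cons.mpr ⟨⟨_, _, rfl⟩, hL⟩
    · simp only [Fin.val_zero, zero_add] at hR₀ hsub
      rw [ofFn_succ, flatten_cons, hR₀, replicate_add, flatten_cons, append_assoc, append_assoc]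
      exact (hsub.append_left _).append_left _

theorem IsChain.length_le_of_sublist_flatten_ofFn {n : ℕ} {R : Fin n → List α} (c : ℕ → α)
    (hR : ∀ k : Fin n, ∃ p q, R k = replicate p (c k) ++ replicate q (c (k + 1)))
    (hl : l.IsChain (· ≠ ·)) (h : l <+ (ofFn R).flatten) : l.length ≤ n + 1 := by
  obtain ⟨p, L, hlen, hL, hsub⟩ := exists_sublist_replicate_append_flatten R c hR
  have hcover : ∀ M ∈ replicate p (c 0) :: L, ∃ a q, M = replicate q a :=
    forall_mem_cons.mpr ⟨⟨_, _, rfl⟩, hL⟩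
  simpa [hlen] using hl.length_le_of_sublist_flatten hcover (h.trans hsub)

theorem flatten_map_filter {ι : Type*} (h : ι → List α) (I : List ι) (q : ι → Bool)
    (hq : ∀ i ∈ I, q i = false → h i = []) :
    ((I.filter q).map h).flatten = (I.map h).flatten := by
  induction I with
  | nil => rfl
  | cons i I ih =>
    rw [forall_mem_cons] at hq
    cases hi : q i <;> simp [hi, hq.1, ih hq.2]

theorem filter_finRange_eq_pair {m : ℕ} {j j' : Fin m} (h : j < j') :
    (finRange m).filter (fun k => k = j ∨ k = j') = [j, j'] :=
  ((pairwise_lt_finRange m).filter _).eq_of_mem_iff (by simpa using h) (by simp)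

end List

section DIntersecting

variable {α : Type*} {N : ℕ} {W : List α} {x y : α}

theorem dIntersecting_comm : DIntersecting N W x y ↔ DIntersecting N W y x := by
  simp only [DIntersecting, or_comm]

theorem DIntersecting.exists_sublist_filter [DecidableEq α] (h : DIntersecting N W x y) :
    ∃ l, l <+ W.filter (fun z => z = x ∨ z = y) ∧ l.IsChain (· ≠ ·) ∧ N + 2 ≤ l.length := by
  obtain ⟨l, hsub, hl, hxy, hlen⟩ := h
  refine ⟨l, ?_, hl, hlen⟩
  have hfilter : l.filter (fun z => z = x ∨ z = y) = l := filter_eq_self.mpr (by simpa using hxy)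
  exact hfilter ▸ hsub.filter _

variable [DecidableEq α] {n : ℕ} {R : Fin n → List α}

theorem not_dIntersecting_flatten_ofFn_of_not_mem_or_not_mem (hn : n ≤ N + 1)
    (hR : ∀ k, x ∉ R k ∨ y ∉ R k) : ¬ DIntersecting N (ofFn R).flatten x y := by
  intro h
  obtain ⟨l, hsub, hl, hlen⟩ := h.exists_sublist_filter
  rw [filter_flatten, map_ofFn] at hsub
  have hconst : ∀ M ∈ ofFn (filter (fun z => z = x ∨ z = y) ∘ R), ∃ a p, M = replicate p a := by
    simp only [mem_ofFn, Function.comp_apply]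
    rintro _ ⟨k, rfl⟩
    rcases hR k with hx | hy
    · refine ⟨y, _, eq_replicate_iff.mpr ⟨rfl, fun z hz => ?_⟩⟩
      obtain ⟨hzR, hz⟩ := by simpa using hz
      exact hz.resolve_left (by rintro rfl; exact hx hzR)
    · refine ⟨x, _, eq_replicate_iff.mpr ⟨rfl, fun z hz => ?_⟩⟩
      obtain ⟨hzR, hz⟩ := by simpa using hz
      exact hz.resolve_right (by rintro rfl; exact hy hzR)
  have := hl.length_le_of_sublist_flatten hconst hsub
  simp only [length_ofFn] at this
  omega

theorem not_dIntersecting_flatten_ofFn_of_filter_eq (c : ℕ → α) (hn : n ≤ N)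
    (hR : ∀ k : Fin n, ∃ p q,
      (R k).filter (fun z => z = x ∨ z = y) = replicate p (c k) ++ replicate q (c (k + 1))) :
    ¬ DIntersecting N (ofFn R).flatten x y := by
  intro h
  obtain ⟨l, hsub, hl, hlen⟩ := h.exists_sublist_filter
  rw [filter_flatten, map_ofFn] at hsub
  have := hl.length_le_of_sublist_flatten_ofFn c hR hsub
  omega

end DIntersecting

section AltWord

variable {α : Type*} {a b : α} {n : ℕ}

theorem length_altWord : (altWord a b n).length = n := by
  simp [altWord]

theorem eq_or_eq_of_mem_altWord {z : α} (h : z ∈ altWord a b n) : z = a ∨ z = b := by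
  obtain ⟨k, -, rfl⟩ := mem_map.mp h
  split_ifs <;> simp

theorem isChain_altWord (hab : a ≠ b) : (altWord a b n).IsChain (· ≠ ·) := by
  rw [altWord, isChain_map, isChain_range]
  intro k _
  rcases Nat.mod_two_eq_zero_or_one k with hk | hk <;>
    simp [hk, Nat.succ_mod_two_eq_one_iff.mpr, Nat.succ_mod_two_eq_zero_iff.mpr, hab, hab.symm]

end AltWord

section BipartiteWord

variable {d m : ℕ} (G : SimpleGraph (Fin d ⊕ Fin m)) [DecidableRel G.Adj]

def bipBlockOf (N : ℕ) (i : Fin d) (j : Fin m) : List (Fin d ⊕ Fin m) :=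
  if G.Adj (Sum.inl i) (Sum.inr j) then altWord (Sum.inl i) (Sum.inr j) (N + 2) else []

def bipRowOf (N : ℕ) (i : Fin d) : List (Fin d ⊕ Fin m) :=
  ((if i.val % 2 = 0 then finRange m else (finRange m).reverse).map (bipBlockOf G N i)).flatten

def bipWordOf (N : ℕ) : List (Fin d ⊕ Fin m) :=
  ((finRange d).map (bipRowOf G N)).flatten

theorem bipWord_eq_bipWordOf : bipWord d m G = bipWordOf G d := rfl

variable {G} {N : ℕ}

theorem bipWordOf_eq_flatten_ofFn : bipWordOf G N = (ofFn (bipRowOf G N)).flatten := by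
  rw [bipWordOf, ofFn_eq_map]

theorem mem_bipBlockOf {i : Fin d} {j : Fin m} {z : Fin d ⊕ Fin m}
    (h : z ∈ bipBlockOf G N i j) : (z = .inl i ∨ z = .inr j) ∧ G.Adj (.inl i) (.inr j) := by
  unfold bipBlockOf at h
  split_ifs at h with hadj
  · exact ⟨eq_or_eq_of_mem_altWord h, hadj⟩
  · simp at h

theorem mem_bipRowOf {k : Fin d} {z : Fin d ⊕ Fin m} (h : z ∈ bipRowOf G N k) :
    z = .inl k ∨ ∃ j, z = .inr j ∧ G.Adj (.inl k) (.inr j) := by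
  obtain ⟨_, hM, hz⟩ := mem_flatten.mp h
  obtain ⟨j, -, rfl⟩ := mem_map.mp hM
  obtain ⟨rfl | rfl, hadj⟩ := mem_bipBlockOf hz
  exacts [.inl rfl, .inr ⟨j, rfl, hadj⟩]

theorem altWord_sublist_bipWordOf {i : Fin d} {j : Fin m} (h : G.Adj (.inl i) (.inr j)) :
    altWord (.inl i) (.inr j) (N + 2) <+ bipWordOf G N := by
  have hblock : bipBlockOf G N i j <+ bipRowOf G N i :=
    sublist_flatten_of_mem (mem_map.mpr ⟨j, by split_ifs <;> simp, rfl⟩)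
  have hrow : bipRowOf G N i <+ bipWordOf G N :=
    sublist_flatten_of_mem (mem_map.mpr ⟨i, mem_finRange i, rfl⟩)
  simpa [bipBlockOf, h] using hblock.trans hrow

theorem dIntersecting_bipWordOf_of_adj {i : Fin d} {j : Fin m} (h : G.Adj (.inl i) (.inr j)) :
    DIntersecting N (bipWordOf G N) (.inl i) (.inr j) :=
  ⟨_, altWord_sublist_bipWordOf h, isChain_altWord Sum.inl_ne_inr,
    fun _ => eq_or_eq_of_mem_altWord, length_altWord.ge⟩

theorem not_dIntersecting_bipWordOf_inl_inl (hN : d ≤ N + 1) {i i' : Fin d} (hii' : i ≠ i') :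
    ¬ DIntersecting N (bipWordOf G N) (.inl i) (.inl i') := by
  have hrow : ∀ {i k : Fin d}, .inl i ∈ bipRowOf G N k → i = k := fun h => by
    simpa using mem_bipRowOf h
  rw [bipWordOf_eq_flatten_ofFn]
  refine not_dIntersecting_flatten_ofFn_of_not_mem_or_not_mem hN fun k => ?_
  by_contra! h
  exact hii' ((hrow h.1).trans (hrow h.2).symm)

theorem not_dIntersecting_bipWordOf_inl_inr (hN : d ≤ N + 1) {i : Fin d} {j : Fin m}
    (h : ¬ G.Adj (.inl i) (.inr j)) : ¬ DIntersecting N (bipWordOf G N) (.inl i) (.inr j) := by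
  rw [bipWordOf_eq_flatten_ofFn]
  refine not_dIntersecting_flatten_ofFn_of_not_mem_or_not_mem hN fun k => ?_
  by_contra! hk
  have hi : i = k := by simpa using mem_bipRowOf hk.1
  have hadj : G.Adj (.inl k) (.inr j) := by simpa using mem_bipRowOf hk.2
  exact h (hi ▸ hadj)

theorem filter_bipRowOf_inr_inr {j j' : Fin m} (hjj' : j < j') (k : Fin d) :
    ∃ p q, (bipRowOf G N k).filter (fun z => z = .inr j ∨ z = .inr j') =
      replicate p (if k.val % 2 = 0 then .inr j else .inr j') ++
        replicate q (if (k.val + 1) % 2 = 0 then .inr j else .inr j') := by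
  set P := fun jj => (bipBlockOf G N k jj).filter (fun z => z = .inr j ∨ z = .inr j')
  have hP : ∀ jj, P jj = replicate (P jj).length (.inr jj) := fun jj =>
    eq_replicate_iff.mpr ⟨rfl, fun z hz => by
      obtain ⟨hz, hzj⟩ := by simpa [P] using hz
      rcases (mem_bipBlockOf hz).1 with rfl | rfl
      · simp at hzj
      · rfl⟩
  have hzero : ∀ jj, decide (jj = j ∨ jj = j') = false → P jj = [] := fun jj hjj => by
    refine filter_eq_nil_iff.mpr fun z hz => ?_
    rcases (mem_bipBlockOf hz).1 with rfl | rfl <;> simp_all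
  have hrow : (bipRowOf G N k).filter (fun z => z = .inr j ∨ z = .inr j') =
      if k.val % 2 = 0 then P j ++ P j' else P j' ++ P j := by
    rw [bipRowOf, filter_flatten, map_map]
    change (map P _).flatten = _
    rw [← flatten_map_filter _ _ _ fun jj _ => hzero jj]
    split_ifs
    · rw [filter_finRange_eq_pair hjj']
      simp
    · rw [filter_reverse, filter_finRange_eq_pair hjj']
      simp
  rcases Nat.mod_two_eq_zero_or_one k.val with hk | hk
  · refine ⟨(P j).length, (P j').length, ?_⟩
    rw [hrow, hP j, hP j']
    simp [hk, Nat.succ_mod_two_eq_one_iff.mpr hk]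
  · refine ⟨(P j').length, (P j).length, ?_⟩
    rw [hrow, hP j, hP j']
    simp [hk, Nat.succ_mod_two_eq_zero_iff.mpr hk]

theorem not_dIntersecting_bipWordOf_inr_inr (hN : d ≤ N) {j j' : Fin m} (hjj' : j ≠ j') :
    ¬ DIntersecting N (bipWordOf G N) (.inr j) (.inr j') := by
  wlog hlt : j < j' generalizing j j'
  · rw [dIntersecting_comm]
    exact this hjj'.symm (lt_of_le_of_ne (not_lt.mp hlt) hjj'.symm)
  rw [bipWordOf_eq_flatten_ofFn]
  exact not_dIntersecting_flatten_ofFn_of_filter_eq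
    (fun k => if k % 2 = 0 then .inr j else .inr j') hN (filter_bipRowOf_inr_inr hlt)

theorem genWordRepresents_bipWordOf (hV : ∀ i i' : Fin d, ¬ G.Adj (.inl i) (.inl i'))
    (hU : ∀ j j' : Fin m, ¬ G.Adj (.inr j) (.inr j')) (hN : d ≤ N) :
    GenWordRepresents N (bipWordOf G N) G := by
  have hN' : d ≤ N + 1 := hN.trans N.le_succ
  have hmixed : ∀ i j,
      DIntersecting N (bipWordOf G N) (.inl i) (.inr j) ↔ G.Adj (.inl i) (.inr j) := fun _ _ =>
    ⟨not_imp_not.mp (not_dIntersecting_bipWordOf_inl_inr hN'), dIntersecting_bipWordOf_of_adj⟩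
  rintro (i | j) (i' | j') hne
  · exact iff_of_false (not_dIntersecting_bipWordOf_inl_inl hN' (by simpa using hne)) (hV i i')
  · exact hmixed i j'
  · exact dIntersecting_comm.trans ((hmixed i' j).trans (G.adj_comm _ _))
  · exact iff_of_false (not_dIntersecting_bipWordOf_inr_inr hN (by simpa using hne)) (hU j j')

end BipartiteWord

theorem bipartite_genWordRepresentable_general (d m : ℕ)
    (G : SimpleGraph (Fin d ⊕ Fin m)) [DecidableRel G.Adj]
    (hV : ∀ i j : Fin d, ¬ G.Adj (Sum.inl i) (Sum.inl j))
    (hU : ∀ i j : Fin m, ¬ G.Adj (Sum.inr i) (Sum.inr j)) :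
    GenWordRepresents d (bipWord d m G) G ∧
      ∀ d' : ℕ, d ≤ d' → ∃ W' : List (Fin d ⊕ Fin m), GenWordRepresents d' W' G := by
  refine ⟨?_, fun d' hd' => ⟨bipWordOf G d', genWordRepresents_bipWordOf hV hU hd'⟩⟩
  rw [bipWord_eq_bipWordOf]
  exact genWordRepresents_bipWordOf hV hU le_rfl

/-- Every bipartite graph `G = (U ∪ V, E)` with `|V| = d ≤ m = |U|` is general
`d'`-word-representable for every `d' ≥ d`; concretely, the word `W = W₁⋯W_d` built from
the blocks `F_i(u_j)` is a general `d`-word-representant of `G`. -/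
theorem bipartite_genWordRepresentable (d m : ℕ) (hdm : d ≤ m)
    (G : SimpleGraph (Fin d ⊕ Fin m)) [DecidableRel G.Adj]
    (hV : ∀ i j : Fin d, ¬ G.Adj (Sum.inl i) (Sum.inl j))
    (hU : ∀ i j : Fin m, ¬ G.Adj (Sum.inr i) (Sum.inr j)) :
    GenWordRepresents d (bipWord d m G) G ∧
      ∀ d' : ℕ, d ≤ d' → ∃ W' : List (Fin d ⊕ Fin m), GenWordRepresents d' W' G :=
  bipartite_genWordRepresentable_general d m G hV hU
end

section
/- Breen's theorem on Radon partitions of cyclic polytopes: Let A and B be disjoint finite sets of points on the moment curve x(t) = (t, t², …, t^d) in ℝ^d (given by parameter sets T_A, T_B ⊂ ℝ with T_A ∩ T_B = ∅). Then conv(A) ∩ conv(B) ≠ ∅ if and only if the sequence of labels (A or B) of the points of A ∪ B, ordered by their parameters along the curve, contains an alternating subsequence of length d + 2 (i.e., d + 2 points with parameters t_1 < t_2 < ⋯ < t_{d+2} alternately belonging to A and B). -/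
/-!
Pulled back along the moment curve, affine functions on `ℝ^d` are exactly the real polynomials of
degree at most `d`. Since finite point sets have compact convex hulls, the hulls of `A` and `B`
are disjoint iff some polynomial of degree `≤ d` is positive on `T_A` and negative on `T_B`.
Such a polynomial has a root between any two consecutive terms of an alternating sequence, so an
alternating sequence of length `d + 2` would give it `d + 1` roots. Conversely, if the label
changes at most `d` times along the curve, then the product of `X - r`, taken over one point `r`
in each gap where the label changes, has the required signs once its overall sign is fixed.
-/

open Polynomial

def momentCurve (d : ℕ) (s : ℝ) : Fin d → ℝ := fun k => s ^ (k.val + 1)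

section MomentCurve

variable {d : ℕ}

theorem exists_polynomial_eval_eq_functional (f : (Fin d → ℝ) →ₗ[ℝ] ℝ) (c : ℝ) :
    ∃ Q : ℝ[X], Q.natDegree ≤ d ∧ ∀ s, Q.eval s = f (momentCurve d s) + c := by
  classical
  refine ⟨C c + ∑ k : Fin d, C (f fun j => if k = j then 1 else 0) * X ^ (k.val + 1), ?_,
    fun s => ?_⟩
  · refine natDegree_add_le_of_degree_le (by simp)
      (natDegree_sum_le_of_forall_le _ _ fun k _ => ?_)
    exact (natDegree_C_mul_X_pow_le _ _).trans k.isLt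
  · simp only [eval_add, eval_C, eval_finsetSum, eval_mul, eval_pow, eval_X,
      LinearMap.pi_apply_eq_sum_univ f (momentCurve d s), momentCurve, smul_eq_mul]
    rw [add_comm]
    exact congrArg (· + c) (Finset.sum_congr rfl fun k _ => mul_comm _ _)

theorem exists_functional_eval_eq (Q : ℝ[X]) (hQ : Q.natDegree ≤ d) :
    ∃ f : (Fin d → ℝ) →ₗ[ℝ] ℝ, ∀ s, Q.eval s = f (momentCurve d s) + Q.coeff 0 := by
  refine ⟨∑ k : Fin d, Q.coeff (k.val + 1) • LinearMap.proj k, fun s => ?_⟩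
  rw [eval_eq_sum_range' (Nat.lt_succ_of_le hQ), Finset.sum_range_succ',
    ← Fin.sum_univ_eq_sum_range]
  simp [momentCurve]

theorem disjoint_convexHull_momentCurve_of_polynomial (Q : ℝ[X]) (hQ : Q.natDegree ≤ d)
    {A B : Set ℝ} (hA : ∀ a ∈ A, 0 < Q.eval a) (hB : ∀ b ∈ B, Q.eval b < 0) :
    Disjoint (convexHull ℝ (momentCurve d '' A)) (convexHull ℝ (momentCurve d '' B)) := by
  obtain ⟨f, hf⟩ := exists_functional_eval_eq Q hQ
  have hA' : convexHull ℝ (momentCurve d '' A) ⊆ {w | -Q.coeff 0 < f w} := by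
    refine convexHull_min (Set.image_subset_iff.2 fun a ha => ?_) (convex_halfSpace_gt f.isLinear _)
    have := hA a ha
    simp only [Set.mem_preimage, Set.mem_ofPred_eq]
    linarith [hf a]
  have hB' : convexHull ℝ (momentCurve d '' B) ⊆ {w | f w < -Q.coeff 0} := by
    refine convexHull_min (Set.image_subset_iff.2 fun b hb => ?_) (convex_halfSpace_lt f.isLinear _)
    have := hB b hb
    simp only [Set.mem_preimage, Set.mem_ofPred_eq]
    linarith [hf b]
  exact Set.disjoint_of_subset hA' hB'
    (Set.disjoint_left.2 fun w (h₁ : _ < f w) (h₂ : f w < _) => lt_asymm h₁ h₂)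

theorem exists_polynomial_of_disjoint_convexHull_momentCurve {A B : Finset ℝ}
    (h : Disjoint (convexHull ℝ (momentCurve d '' A)) (convexHull ℝ (momentCurve d '' B))) :
    ∃ Q : ℝ[X], Q.natDegree ≤ d ∧ (∀ a ∈ A, 0 < Q.eval a) ∧ ∀ b ∈ B, Q.eval b < 0 := by
  obtain ⟨f, u, v, hfA, huv, hfB⟩ := geometric_hahn_banach_compact_closed
    (convex_convexHull ℝ _) ((A.finite_toSet.image _).isCompact_convexHull ℝ)
    (convex_convexHull ℝ _) ((B.finite_toSet.image _).isCompact_convexHull ℝ).isClosed h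
  obtain ⟨Q, hQ, hQf⟩ := exists_polynomial_eval_eq_functional (-f.toLinearMap) ((u + v) / 2)
  refine ⟨Q, hQ, fun a ha => ?_, fun b hb => ?_⟩
  · have := hfA _ (subset_convexHull ℝ _ ⟨a, ha, rfl⟩)
    simp only [hQf, LinearMap.neg_apply, ContinuousLinearMap.coe_coe]
    linarith
  · have := hfB _ (subset_convexHull ℝ _ ⟨b, hb, rfl⟩)
    simp only [hQf, LinearMap.neg_apply, ContinuousLinearMap.coe_coe]
    linarith

theorem disjoint_convexHull_momentCurve_iff {A B : Finset ℝ} :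
    Disjoint (convexHull ℝ (momentCurve d '' A)) (convexHull ℝ (momentCurve d '' B)) ↔
      ∃ Q : ℝ[X], Q.natDegree ≤ d ∧ (∀ a ∈ A, 0 < Q.eval a) ∧ ∀ b ∈ B, Q.eval b < 0 :=
  ⟨exists_polynomial_of_disjoint_convexHull_momentCurve,
    fun ⟨Q, hQ, hA, hB⟩ => disjoint_convexHull_momentCurve_of_polynomial Q hQ hA hB⟩

end MomentCurve

section Alternating

variable {α : Type*} (p : α → Prop)

def IsAlternating [LT α] {n : ℕ} (s : Fin (n + 1) → α) : Prop :=
  ∀ i : Fin n, s i.castSucc < s i.succ ∧ ¬(p (s i.castSucc) ↔ p (s i.succ))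

variable {p}

theorem isAlternating_iff [Preorder α] {n : ℕ} {s : Fin (n + 1) → α} :
    IsAlternating p s ↔ StrictMono s ∧ ∀ i : Fin n, ¬(p (s i.castSucc) ↔ p (s i.succ)) := by
  rw [Fin.strictMono_iff_lt_succ, ← forall_and]
  rfl

theorem IsAlternating.snoc [LT α] {n : ℕ} {s : Fin (n + 1) → α} (hs : IsAlternating p s) {b : α}
    (hlt : s (Fin.last n) < b) (hb : ¬(p (s (Fin.last n)) ↔ p b)) :
    IsAlternating p (Fin.snoc s b : Fin (n + 2) → α) := by
  intro i
  induction i using Fin.lastCases with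
  | last => rw [Fin.succ_last, Fin.snoc_castSucc, Fin.snoc_last]; exact ⟨hlt, hb⟩
  | cast i => rw [Fin.succ_castSucc, Fin.snoc_castSucc, Fin.snoc_castSucc]; exact hs i

theorem exists_isAlternating_insert [LinearOrder α] {n : ℕ} {S : Finset α} {m a : α} (hm : m ∈ S)
    (hmax : ∀ x ∈ S, x ≤ m) (hma : m < a) (hlabel : ¬(p m ↔ p a)) {s : Fin (n + 1) → α}
    (hs : IsAlternating p s) (hsS : ∀ i, s i ∈ S) :
    ∃ s' : Fin (n + 2) → α, IsAlternating p s' ∧ ∀ i, s' i ∈ insert a S := by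
  by_cases hlast : p (s (Fin.last n)) ↔ p a
  · have hne : s (Fin.last n) ≠ m := fun h => hlabel (h ▸ hlast)
    refine ⟨Fin.snoc s m, hs.snoc ((hmax _ (hsS _)).lt_of_ne hne) (by tauto), fun i => ?_⟩
    induction i using Fin.lastCases <;> simp [hm, hsS]
  · refine ⟨Fin.snoc s a, hs.snoc ((hmax _ (hsS _)).trans_lt hma) hlast, fun i => ?_⟩
    induction i using Fin.lastCases <;> simp [hsS]

end Alternating

section LabelSign

variable (p : ℝ → Prop) [DecidablePred p]

noncomputable def labelSign (t : ℝ) : ℝ := if p t then 1 else -1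

variable {p}

theorem labelSign_ne_zero (t : ℝ) : labelSign p t ≠ 0 := by
  unfold labelSign; split_ifs <;> norm_num

theorem labelSign_congr {x y : ℝ} (h : p x ↔ p y) : labelSign p x = labelSign p y := by
  simp only [labelSign, h]

theorem labelSign_eq_neg_of_not_iff {x y : ℝ} (h : ¬(p x ↔ p y)) :
    labelSign p y = -labelSign p x := by
  unfold labelSign; split_ifs <;> first | tauto | norm_num

theorem exists_root_of_isAlternating {Q : ℝ[X]} {n : ℕ} {s : Fin (n + 1) → ℝ}
    (hs : IsAlternating p s) (hQ : ∀ i, 0 < labelSign p (s i) * Q.eval (s i)) (i : Fin n) :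
    ∃ r ∈ Set.Ioo (s i.castSucc) (s i.succ), Q.eval r = 0 := by
  obtain ⟨hlt, hlabel⟩ := hs i
  have hy := hQ i.succ
  rw [labelSign_eq_neg_of_not_iff hlabel, neg_mul] at hy
  obtain ⟨r, hr, hr0⟩ := intermediate_value_Ioo' hlt.le
    (Q.continuous.const_smul (labelSign p (s i.castSucc))).continuousOn
    ⟨neg_pos.1 hy, hQ i.castSucc⟩
  exact ⟨r, hr, (smul_eq_zero.1 hr0).resolve_left (labelSign_ne_zero _)⟩

theorem le_natDegree_of_isAlternating {Q : ℝ[X]} {n : ℕ} {s : Fin (n + 1) → ℝ}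
    (hs : IsAlternating p s) (hQ : ∀ i, 0 < labelSign p (s i) * Q.eval (s i)) :
    n ≤ Q.natDegree := by
  choose r hr hr0 using exists_root_of_isAlternating hs hQ
  have hsmono : StrictMono s := Fin.strictMono_iff_lt_succ.2 fun i => (hs i).1
  have hrmono : StrictMono r := fun i j hij =>
    calc r i < s i.succ := (hr i).2
      _ ≤ s j.castSucc := hsmono.monotone (Fin.succ_le_castSucc_iff.2 hij)
      _ < r j := (hr j).1
  have hQ0 : Q ≠ 0 := by
    rintro rfl
    simpa using hQ 0
  by_contra! h
  exact hQ0 (eq_zero_of_natDegree_lt_card_of_eval_eq_zero Q hrmono.injective hr0 (by simpa using h))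

/-- The second conjunct, about the sign of `Q` to the right of the largest point of `S`, is what
makes the induction go through: a new point beyond the maximum is then either matched by `Q`
as it is, or by `Q` with one extra root between the old maximum and the new point. -/
theorem exists_polynomial_labelSign_of_not_isAlternating (S : Finset ℝ) (n : ℕ)
    (hS : ¬∃ s : Fin (n + 2) → ℝ, IsAlternating p s ∧ ∀ i, s i ∈ S) :
    ∃ Q : ℝ[X], Q.natDegree ≤ n ∧ (∀ t ∈ S, 0 < labelSign p t * Q.eval t) ∧
      ∀ m ∈ S, (∀ x ∈ S, x ≤ m) → ∀ u, m ≤ u → 0 < labelSign p m * Q.eval u := by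
  classical
  induction S using Finset.induction_on_max generalizing n with
  | empty => exact ⟨1, by simp, by simp, by simp⟩
  | insert a S hlt ih =>
    have hmax_eq : ∀ m ∈ insert a S, (∀ x ∈ insert a S, x ≤ m) → m = a := fun m hm hmax =>
      (Finset.mem_insert.1 hm).resolve_right fun hmS =>
        (hlt m hmS).not_ge (hmax a (Finset.mem_insert_self a S))
    suffices h : ∃ Q : ℝ[X], Q.natDegree ≤ n ∧ (∀ t ∈ S, 0 < labelSign p t * Q.eval t) ∧
        ∀ u, a ≤ u → 0 < labelSign p a * Q.eval u by
      obtain ⟨Q, hQ, hS, ha⟩ := h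
      refine ⟨Q, hQ, (Finset.forall_mem_insert _ _ _).2 ⟨ha a le_rfl, hS⟩, fun m hm hmax => ?_⟩
      rw [hmax_eq m hm hmax]
      exact ha
    rcases S.eq_empty_or_nonempty with rfl | hne
    · exact ⟨C (labelSign p a), by simp, by simp,
        fun _ _ => by simpa using mul_self_pos.2 (labelSign_ne_zero a)⟩
    set m := S.max' hne
    have hm : m ∈ S := S.max'_mem hne
    have hmax : ∀ x ∈ S, x ≤ m := fun x hx => S.le_max' x hx
    by_cases hlabel : p m ↔ p a
    · have hS' : ¬∃ s : Fin (n + 2) → ℝ, IsAlternating p s ∧ ∀ i, s i ∈ S :=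
        fun ⟨s, hs, hsS⟩ => hS ⟨s, hs, fun i => Finset.mem_insert_of_mem (hsS i)⟩
      obtain ⟨Q, hQ, hQS, hQm⟩ := ih n hS'
      refine ⟨Q, hQ, hQS, fun u hu => ?_⟩
      rw [← labelSign_congr hlabel]
      exact hQm m hm hmax u ((hlt m hm).le.trans hu)
    · have hS' : ¬∃ s : Fin (n + 1) → ℝ, IsAlternating p s ∧ ∀ i, s i ∈ S :=
        fun ⟨s, hs, hsS⟩ => hS (exists_isAlternating_insert hm hmax (hlt m hm) hlabel hs hsS)
      obtain _ | k := n
      · exact (hS' ⟨fun _ => m, fun i => i.elim0, fun _ => hm⟩).elim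
      obtain ⟨Q, hQ, hQS, hQm⟩ := ih k hS'
      obtain ⟨r, hmr, hra⟩ := exists_between (hlt m hm)
      refine ⟨-(Q * (X - C r)), ?_, fun t ht => ?_, fun u hu => ?_⟩
      · rw [natDegree_neg]
        exact natDegree_mul_le.trans (add_le_add hQ (natDegree_X_sub_C_le r))
      · have := hQS t ht
        have htr : t < r := (hmax t ht).trans_lt hmr
        simp only [eval_neg, eval_mul, eval_sub, eval_X, eval_C]
        nlinarith
      · have := hQm m hm hmax u ((hlt m hm).le.trans hu)
        rw [labelSign_eq_neg_of_not_iff hlabel]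
        simp only [eval_neg, eval_mul, eval_sub, eval_X, eval_C]
        nlinarith

end LabelSign

theorem forall_labelSign_mul_pos_iff {A B : Finset ℝ} (hAB : Disjoint A B) (Q : ℝ[X]) :
    (∀ t ∈ A ∪ B, 0 < labelSign (· ∈ A) t * Q.eval t) ↔
      (∀ a ∈ A, 0 < Q.eval a) ∧ ∀ b ∈ B, Q.eval b < 0 := by
  simp only [Finset.forall_mem_union, labelSign]
  refine and_congr (forall₂_congr fun a ha => by simp [ha]) (forall₂_congr fun b hb => ?_)
  simp [Finset.disjoint_right.1 hAB hb]

theorem exists_polynomial_separating_iff {A B : Finset ℝ} (hAB : Disjoint A B) (n : ℕ) :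
    (∃ Q : ℝ[X], Q.natDegree ≤ n ∧ (∀ a ∈ A, 0 < Q.eval a) ∧ ∀ b ∈ B, Q.eval b < 0) ↔
      ¬∃ s : Fin (n + 2) → ℝ, IsAlternating (· ∈ A) s ∧ ∀ i, s i ∈ A ∪ B := by
  simp only [← forall_labelSign_mul_pos_iff hAB]
  constructor
  · rintro ⟨Q, hQ, hQAB⟩ ⟨s, hs, hsAB⟩
    have := le_natDegree_of_isAlternating hs fun i => hQAB _ (hsAB i)
    omega
  · intro h
    obtain ⟨Q, hQ, hQAB, -⟩ := exists_polynomial_labelSign_of_not_isAlternating _ n h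
    exact ⟨Q, hQ, hQAB⟩

theorem breen_radon_cyclic_general (d : ℕ) (TA TB : Finset ℝ)
    (hdisj : Disjoint TA TB) :
    (convexHull ℝ ((fun s : ℝ => fun k : Fin d => s ^ (k.val + 1)) '' (TA : Set ℝ)) ∩
        convexHull ℝ ((fun s : ℝ => fun k : Fin d => s ^ (k.val + 1)) '' (TB : Set ℝ))).Nonempty
      ↔ ∃ s : Fin (d + 2) → ℝ, StrictMono s ∧ (∀ i, s i ∈ TA ∪ TB) ∧
          ∀ i : Fin (d + 1), ¬(s i.castSucc ∈ TA ↔ s i.succ ∈ TA) := by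
  change (convexHull ℝ (momentCurve d '' TA) ∩ convexHull ℝ (momentCurve d '' TB)).Nonempty ↔ _
  rw [← Set.not_disjoint_iff_nonempty_inter, disjoint_convexHull_momentCurve_iff,
    exists_polynomial_separating_iff hdisj, not_not]
  exact exists_congr fun s => by rw [isAlternating_iff]; tauto

/-- Breen's theorem: for disjoint finite parameter sets `TA`, `TB ⊂ ℝ`, the convex hulls of
the corresponding point sets on the moment curve `x(s) = (s, s², …, s^d)` in `ℝ^d` meet iff
there are `d + 2` parameters `s₁ < ⋯ < s_{d+2}` in `TA ∪ TB` belonging alternately to `TA`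
and `TB`. -/
theorem breen_radon_cyclic (d : ℕ) (hd : 1 ≤ d) (TA TB : Finset ℝ)
    (hdisj : Disjoint TA TB) :
    (convexHull ℝ ((fun s : ℝ => fun k : Fin d => s ^ (k.val + 1)) '' (TA : Set ℝ)) ∩
        convexHull ℝ ((fun s : ℝ => fun k : Fin d => s ^ (k.val + 1)) '' (TB : Set ℝ))).Nonempty
      ↔ ∃ s : Fin (d + 2) → ℝ, StrictMono s ∧ (∀ i, s i ∈ TA ∪ TB) ∧
          ∀ i : Fin (d + 1), ¬(s i.castSucc ∈ TA ↔ s i.succ ∈ TA) :=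
  breen_radon_cyclic_general d TA TB hdisj
end

section
/- For every m ≥ 3, the m-cycle C_m is general 2-word-representable: there is a word W over the alphabet {1,…,m} such that for distinct i, j, the letters i and j have an alternating subsequence of length ≥ 4 in W if and only if i and j are adjacent in C_m. -/
theorem DIntersecting.symm {V : Type*} {d : ℕ} {W : List V} {a b : V}
    (h : DIntersecting d W a b) : DIntersecting d W b a :=
  let ⟨l, hsub, hchain, hmem, hlen⟩ := h
  ⟨l, hsub, hchain, fun c hc => (hmem c hc).symm, hlen⟩

section Alternating

variable {V : Type*} {l L S : List V} {x y : V}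

theorem List.IsChain.length_le_one_of_forall_eq (hchain : l.IsChain (· ≠ ·))
    (hx : ∀ c ∈ l, c = x) : l.length ≤ 1 := by
  match l, hchain with
  | [], _ | [_], _ => simp
  | a :: b :: _, hchain =>
    exact absurd ((hx a (by simp)).trans (hx b (by simp)).symm)
      (List.isChain_cons_cons.mp hchain).1

theorem length_le_one_of_alternating_of_infix (hchain : l.IsChain (· ≠ ·))
    (hmem : ∀ c ∈ l, c = x ∨ c = y) (hL : L <:+: l) (hLS : L.Sublist S) (hy : y ∉ S) :
    L.length ≤ 1 :=
  (hchain.infix hL).length_le_one_of_forall_eq fun c hc =>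
    (hmem c (hL.subset hc)).resolve_right fun h => hy (h ▸ hLS.subset hc)

theorem not_dIntersecting_two_of_append {P Q R : List V}
    (hP : y ∉ P) (hQ : x ∉ Q) (hR : y ∉ R) : ¬ DIntersecting 2 (P ++ Q ++ R) x y := by
  rintro ⟨l, hsub, hchain, hmem, hlen⟩
  obtain ⟨l₁₂, l₃, rfl, hsub₁₂, hsub₃⟩ := List.sublist_append_iff.mp hsub
  obtain ⟨l₁, l₂, rfl, hsub₁, hsub₂⟩ := List.sublist_append_iff.mp hsub₁₂
  have hmem' : ∀ c ∈ l₁ ++ l₂ ++ l₃, c = y ∨ c = x := fun c hc => (hmem c hc).symm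
  have h₁ := length_le_one_of_alternating_of_infix hchain hmem
    ⟨[], l₂ ++ l₃, by simp⟩ hsub₁ hP
  have h₂ := length_le_one_of_alternating_of_infix hchain hmem'
    (List.infix_append l₁ l₂ l₃) hsub₂ hQ
  have h₃ := length_le_one_of_alternating_of_infix hchain hmem
    (List.suffix_append (l₁ ++ l₂) l₃).isInfix hsub₃ hR
  simp only [List.length_append] at hlen
  omega

end Alternating

namespace CycleWord

variable (m : ℕ) [NeZero m]

def block (i : ℕ) : List (Fin m) :=
  [Fin.ofNat m i, Fin.ofNat m (i + 1), Fin.ofNat m i, Fin.ofNat m (i + 1)]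

def segment (s n : ℕ) : List (Fin m) := (List.range' s n).flatMap (block m)

variable {m}

theorem segment_eq_append {s n n₁ n₂ : ℕ} (h : n₁ + n₂ = n) :
    segment m s n = segment m s n₁ ++ segment m (s + n₁) n₂ := by
  rw [segment, segment, segment, ← List.flatMap_append, List.range'_append_1, h]

theorem exists_of_mem_segment {s n : ℕ} {c : Fin m} (hc : c ∈ segment m s n)
    (hsn : s + n ≤ m) :
    ∃ i, s ≤ i ∧ i < s + n ∧
      (c.val = i ∨ c.val = i + 1 ∨ (c.val = 0 ∧ i + 1 = m)) := by
  simp only [segment, block, List.mem_flatMap, List.mem_range'_1, List.mem_cons,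
    List.not_mem_nil, or_false] at hc
  obtain ⟨i, ⟨hsi, hin⟩, hci⟩ := hc
  refine ⟨i, hsi, hin, ?_⟩
  have hi : i < m := by omega
  rcases Nat.lt_or_ge (i + 1) m with hlt | hge
  · rcases hci with rfl | rfl | rfl | rfl <;>
      simp [Nat.mod_eq_of_lt hi, Nat.mod_eq_of_lt hlt]
  · obtain rfl : m = i + 1 := by omega
    rcases hci with rfl | rfl | rfl | rfl <;> simp

theorem block_sublist_segment {i : ℕ} (hi : i < m) : (block m i).Sublist (segment m 0 m) :=
  List.sublist_flatten_of_mem <| List.mem_map_of_mem <|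
    List.mem_range'_1.mpr ⟨i.zero_le, by omega⟩

theorem dIntersecting_segment_of_succ {x y : Fin m} (hxy : x ≠ y)
    (h : (x.val + 1) % m = y.val) :
    DIntersecting 2 (segment m 0 m) x y := by
  have hchain : [x, y, x, y].IsChain (· ≠ ·) :=
    .cons_cons hxy (.cons_cons hxy.symm (.cons_cons hxy (.singleton _)))
  refine ⟨[x, y, x, y], ?_, hchain, by simp, by simp⟩
  have hblock : block m x.val = [x, y, x, y] := by simp [block, Fin.ext_iff, h]
  exact hblock ▸ block_sublist_segment x.isLt

theorem not_dIntersecting_segment {x y : Fin m} (hlt : x < y)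
    (hxy : (x.val + 1) % m ≠ y.val) (hyx : (y.val + 1) % m ≠ x.val) :
    ¬ DIntersecting 2 (segment m 0 m) x y := by
  have hy := y.isLt
  have hgap : x.val + 2 ≤ y.val := by
    rw [Nat.mod_eq_of_lt (by omega)] at hxy
    omega
  have hwrap : x.val = 0 → y.val + 1 ≠ m := fun hx hym => hyx (by rw [hym, Nat.mod_self, hx])
  rcases Nat.eq_zero_or_pos x.val with hx | hx
  · rw [segment_eq_append (n₁ := m - 1) (n₂ := 1) (by omega),
      segment_eq_append (n₁ := 1) (n₂ := m - 2) (by omega)]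
    refine not_dIntersecting_two_of_append ?_ ?_ ?_ <;> intro hc <;>
      obtain ⟨i, _, _, _⟩ := exists_of_mem_segment hc (by omega) <;> omega
  · rw [← List.append_nil (segment m 0 m),
      segment_eq_append (n₁ := x.val + 1) (n₂ := m - (x.val + 1)) (by omega)]
    refine not_dIntersecting_two_of_append ?_ ?_ List.not_mem_nil <;> intro hc <;>
      obtain ⟨i, _, _, _⟩ := exists_of_mem_segment hc (by omega) <;> omega

end CycleWord

open CycleWord in
/-- For every `m ≥ 3`, the `m`-cycle is general `2`-word-representable: there is a word `W`
over `Fin m` such that distinct letters `i`, `j` admit an alternating subsequence of length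
at least `4` in `W` iff `i` and `j` are consecutive on the cycle. -/
theorem cycle_gen2WordRepresentable (m : ℕ) (hm : 3 ≤ m) :
    ∃ W : List (Fin m), ∀ x y : Fin m, x ≠ y →
      (DIntersecting 2 W x y ↔ ((x.val + 1) % m = y.val ∨ (y.val + 1) % m = x.val)) := by
  have : NeZero m := ⟨by omega⟩
  refine ⟨segment m 0 m, fun x y hne => ⟨fun h => ?_, ?_⟩⟩
  · by_contra! hadj
    rcases lt_or_gt_of_ne hne with hlt | hlt
    · exact not_dIntersecting_segment hlt hadj.1 hadj.2 h
    · exact not_dIntersecting_segment hlt hadj.2 hadj.1 h.symm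
  · rintro (h | h)
    · exact dIntersecting_segment_of_succ hne h
    · exact (dIntersecting_segment_of_succ hne.symm h).symm
end
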